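/- Let f : 2^N → ℝ≥0 be a non-negative submodular function on a ground set of k items (|N| = k), and let OPT_1, …, OPT_k be a partition of N. If each element of N is assigned independently and uniformly at random to one of k players (yielding random sets S_1, …, S_k partitioning N), then E[Σ_{i=1}^k f(S_i)] ≥ [1 − (1 − 1/k)^{k−1}] · Σ_{i=1}^k f(OPT_i). -/

import Mathlib

/-!
Player `i` receives each item independently with probability `1/k`, so their expected value is
`∑ₘ C(k,m) k⁻ᵏ (k-1)^(k-m) f̄(m)`, where `f̄(m)` is the average of `f` over `m`-sets. Submodularity,
summed over all ways of adding two items to an `m`-set, makes `f̄` concave; since `f̄(k) ≥ 0`, the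
concave sequence lies above its chord through `m = 1` and `m = k`, i.e.
`(k-1) f̄(m) ≥ (k-m) f̄(1)` for `m ≥ 1`. Summing against the binomial weights gives
`E f(Sᵢ) ≥ (1 - (1-1/k)^(k-1)) f̄(1)`, hence expected welfare `≥ (1 - (1-1/k)^(k-1)) ∑ᵤ f {u}`.
Finally `∑ᵤ f {u} ≥ ∑ᵢ f(OPTᵢ)`: peeling singletons off each block costs `(|OPTᵢ| - 1) f ∅`, and
these costs sum to zero because `k` items are split into exactly `k` blocks.
-/

open Finset Function

theorem concave_seq_chord {g : ℕ → ℝ} {n : ℕ}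
    (hg : ∀ j, j + 2 ≤ n → g j + g (j + 2) ≤ 2 * g (j + 1)) {m : ℕ} (hm : m ≤ n) :
    (n - m) * g 0 + m * g n ≤ n * g m := by
  rcases hm.eq_or_lt with rfl | hm
  · simp
  set Δ : ℕ → ℝ := fun j => g (j + 1) - g j
  have hΔ : ∀ i j, i ≤ j → j < n → Δ j ≤ Δ i := by
    intro i j hij hjn
    induction j, hij using Nat.le_induction with
    | base => rfl
    | succ j _ ih =>
      have := hg j (by omega)
      exact le_trans (by simp only [Δ]; linarith) (ih (by omega))
  have hlow : m * Δ m ≤ g m - g 0 := by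
    have := card_nsmul_le_sum (range m) Δ (Δ m) fun j hj => hΔ j m (mem_range.1 hj).le hm
    rwa [sum_range_sub, card_range, nsmul_eq_mul] at this
  have hup : g n - g m ≤ (n - m) * Δ m := by
    have := sum_le_card_nsmul (range (n - m)) (fun j => g (m + (j + 1)) - g (m + j)) (Δ m)
      fun j hj => hΔ m (m + j) (Nat.le_add_right m j) (by have := mem_range.1 hj; omega)
    rw [sum_range_sub (fun j => g (m + j)), card_range, nsmul_eq_mul,
      Nat.add_sub_cancel' hm.le, add_zero, Nat.cast_sub hm.le] at this
    exact this
  have h1 := mul_le_mul_of_nonneg_left hlow (sub_nonneg.2 (Nat.cast_le.2 hm.le))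
  have h2 := mul_le_mul_of_nonneg_left hup (Nat.cast_nonneg (α := ℝ) m)
  nlinarith

theorem sum_choose_mul_sub_mul_pow {R : Type*} [CommRing R] (x : R) (p : ℕ) :
    ∑ m ∈ range (p + 2), ((p + 1).choose m * ((p : R) + 1 - m)) * x ^ (p + 1 - m) =
      (p + 1) * x * (1 + x) ^ p := by
  have hchoose : ∀ m ∈ range (p + 2),
      (p + 1).choose m * ((p : R) + 1 - m) = (p + 1) * p.choose m := fun m hm => by
    have h := congrArg (Nat.cast : ℕ → R) (Nat.choose_mul_succ_eq p m)
    push_cast [Nat.cast_sub (show m ≤ p + 1 by have := mem_range.1 hm; omega)] at h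
    rw [← h]; ring
  have hpow : ∀ m ∈ range (p + 1), x ^ (p + 1 - m) = x * x ^ (p - m) := fun m hm => by
    rw [show p + 1 - m = p - m + 1 by have := mem_range.1 hm; omega, pow_succ']
  rw [sum_congr rfl fun m hm => by rw [hchoose m hm], sum_range_succ, Nat.choose_succ_self,
    Nat.cast_zero, mul_zero, zero_mul, add_zero, sum_congr rfl fun m hm => by rw [hpow m hm],
    add_pow, mul_assoc, mul_sum, mul_sum]
  refine sum_congr rfl fun m _ => ?_
  ring

section Assignment

variable {N β : Type*} [Fintype N] [DecidableEq N] [Fintype β] [DecidableEq β]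

theorem card_fun_filter_eq (b : β) (S : Finset N) :
    #{g : N → β | univ.filter (g · = b) = S} = (Fintype.card β - 1) ^ (Fintype.card N - #S) := by
  have hfiber : ({g : N → β | univ.filter (g · = b) = S} : Finset _) =
      Fintype.piFinset fun u => if u ∈ S then {b} else {b}ᶜ := by
    ext g
    simp only [mem_filter, mem_univ, true_and, Fintype.mem_piFinset, Finset.ext_iff]
    refine forall_congr' fun u => ?_
    by_cases hu : u ∈ S <;> simp [hu]
  rw [hfiber, Fintype.card_piFinset, ← card_compl, ← prod_const, ← univ_inter Sᶜ,
    ← prod_ite_mem]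
  refine prod_congr rfl fun u _ => ?_
  by_cases hu : u ∈ S <;> simp [hu, card_compl]

theorem sum_fun_filter_eq (f : Finset N → ℝ) (b : β) :
    ∑ g : N → β, f (univ.filter (g · = b)) =
      ∑ m ∈ range (Fintype.card N + 1),
        ((Fintype.card β - 1) ^ (Fintype.card N - m) : ℕ) * ∑ S ∈ powersetCard m univ, f S := by
  rw [← sum_fiberwise_of_maps_to (g := fun g : N → β => univ.filter (g · = b))
    (t := (univ : Finset N).powerset) (fun g _ => mem_powerset.2 (subset_univ _))]
  rw [powerset_card_disjiUnion]
  refine (sum_disjiUnion _ _ _).trans (sum_congr (by rw [card_univ]) fun m _ => ?_)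
  rw [mul_sum]
  refine sum_congr rfl fun S hS => ?_
  rw [sum_congr rfl fun g hg => congrArg f (mem_filter.1 hg).2, sum_const, card_fun_filter_eq,
    (mem_powersetCard.1 hS).2, nsmul_eq_mul]

end Assignment

def IsSubmodular {N : Type*} [DecidableEq N] (f : Finset N → ℝ) : Prop :=
  ∀ A B, f (A ∪ B) + f (A ∩ B) ≤ f A + f B

namespace IsSubmodular

variable {N : Type*} [DecidableEq N] {f : Finset N → ℝ}

theorem insert_insert_add_le (hf : IsSubmodular f) {x y : N} (hxy : x ≠ y) (W : Finset N) :
    f (insert x (insert y W)) + f W ≤ f (insert x W) + f (insert y W) := by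
  have hunion : insert x W ∪ insert y W = insert x (insert y W) := by
    ext; simp only [mem_union, mem_insert]; tauto
  have hinter : insert x W ∩ insert y W = W := by
    ext u; simp only [mem_inter, mem_insert]
    constructor
    · rintro ⟨rfl | hu, rfl | hu'⟩ <;> first | exact absurd rfl hxy | assumption
    · exact fun hu => ⟨.inr hu, .inr hu⟩
  simpa only [hunion, hinter] using hf (insert x W) (insert y W)

theorem le_sum_singleton (hf : IsSubmodular f) (O : Finset N) :
    f O ≤ ∑ u ∈ O, f {u} + (1 - #O) * f ∅ := by
  induction O using Finset.induction_on with
  | empty => simp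
  | @insert a O haO ih =>
    have h := hf {a} O
    rw [← insert_eq, singleton_inter_of_notMem haO] at h
    rw [sum_insert haO, card_insert_of_notMem haO]
    push_cast
    linarith

theorem sum_le_sum_singleton [Fintype N] {ι : Type*} [Fintype ι] (hf : IsSubmodular f)
    {P : ι → Finset N} (hdisj : Pairwise (Disjoint on P)) (hcover : univ.biUnion P = univ)
    (hcard : Fintype.card ι = Fintype.card N) :
    ∑ i, f (P i) ≤ ∑ u, f {u} := by
  have hdisj' : ((univ : Finset ι) : Set ι).PairwiseDisjoint P := hdisj.set_pairwise _
  have hcard' : ∑ i, (#(P i) : ℝ) = Fintype.card ι := by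
    rw [← Nat.cast_sum, ← card_biUnion hdisj', hcover, card_univ, hcard]
  calc ∑ i, f (P i) ≤ ∑ i, (∑ u ∈ P i, f {u} + (1 - #(P i)) * f ∅) :=
        sum_le_sum fun i _ => hf.le_sum_singleton (P i)
    _ = ∑ u, f {u} := by
        rw [sum_add_distrib, ← sum_biUnion hdisj', hcover, ← sum_mul, sum_sub_distrib, hcard']
        simp

end IsSubmodular

section Layers

variable {N : Type*} [Fintype N]

def layerSum (f : Finset N → ℝ) (m : ℕ) : ℝ := ∑ S ∈ powersetCard m univ, f S

noncomputable def layerAvg (f : Finset N → ℝ) (m : ℕ) : ℝ :=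
  layerSum f m / (Fintype.card N).choose m

theorem layerSum_nonneg {f : Finset N → ℝ} (hnn : ∀ S, 0 ≤ f S) (m : ℕ) : 0 ≤ layerSum f m :=
  sum_nonneg fun S _ => hnn S

theorem layerSum_eq_choose_mul_layerAvg (f : Finset N → ℝ) {m : ℕ}
    (hm : m ≤ Fintype.card N) : layerSum f m = (Fintype.card N).choose m * layerAvg f m := by
  have : ((Fintype.card N).choose m : ℝ) ≠ 0 := Nat.cast_ne_zero.2 (Nat.choose_pos hm).ne'
  rw [layerAvg, mul_div_cancel₀ _ this]

theorem layerSum_one (f : Finset N → ℝ) : layerSum f 1 = ∑ u, f {u} := by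
  rw [layerSum, powersetCard_one, sum_map]
  rfl

variable [DecidableEq N]

theorem sum_powersetCard_sum_compl_insert {M : Type*} [AddCommMonoid M] (m : ℕ)
    (h : Finset N → M) :
    ∑ W ∈ powersetCard m univ, ∑ x ∈ Wᶜ, h (insert x W) =
      (m + 1) • ∑ V ∈ powersetCard (m + 1) univ, h V := by
  have hcount : ∑ V ∈ powersetCard (m + 1) univ, (m + 1) • h V =
      ∑ V ∈ powersetCard (m + 1) univ, ∑ _x ∈ V, h V :=
    sum_congr rfl fun V hV => by rw [sum_const, (mem_powersetCard.1 hV).2]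
  rw [smul_sum, hcount, sum_sigma', sum_sigma']
  refine sum_nbij' (fun p => ⟨insert p.2 p.1, p.2⟩) (fun p => ⟨p.1.erase p.2, p.2⟩)
    ?_ ?_ ?_ ?_ fun _ _ => rfl
  · rintro ⟨W, x⟩ hp
    simp only [mem_sigma, mem_powersetCard, mem_compl] at hp ⊢
    exact ⟨⟨subset_univ _, by rw [card_insert_of_notMem hp.2, hp.1.2]⟩, mem_insert_self _ _⟩
  · rintro ⟨V, x⟩ hp
    simp only [mem_sigma, mem_powersetCard, mem_compl] at hp ⊢
    exact ⟨⟨subset_univ _, by rw [card_erase_of_mem hp.2, hp.1.2, Nat.add_sub_cancel]⟩,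
      notMem_erase _ _⟩
  · rintro ⟨W, x⟩ hp
    simp only [mem_sigma, mem_compl] at hp
    simp [erase_insert hp.2]
  · rintro ⟨V, x⟩ hp
    simp only [mem_sigma] at hp
    simp [insert_erase hp.2]

namespace IsSubmodular

variable {f : Finset N → ℝ}

/-- Submodularity summed over the ordered pairs `x ≠ y` outside `W`. -/
theorem sum_compl_insert_insert_add_le (hf : IsSubmodular f) (W : Finset N) :
    ∑ x ∈ Wᶜ, ∑ y ∈ (insert x W)ᶜ, f (insert y (insert x W)) + #Wᶜ * (#Wᶜ - 1) * f W ≤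
      2 * (#Wᶜ - 1) * ∑ x ∈ Wᶜ, f (insert x W) := by
  have hpair : ∀ x ∈ Wᶜ, ∑ y ∈ Wᶜ.erase x, (f (insert y (insert x W)) + f W) ≤
      ∑ y ∈ Wᶜ.erase x, (f (insert y W) + f (insert x W)) := fun x _ =>
    sum_le_sum fun y hy => hf.insert_insert_add_le (ne_of_mem_erase hy) W
  have hleft : ∀ x ∈ Wᶜ, ∑ y ∈ Wᶜ.erase x, (f (insert y (insert x W)) + f W) =
      ∑ y ∈ (insert x W)ᶜ, f (insert y (insert x W)) + (#Wᶜ - 1) * f W := fun x hx => by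
    rw [compl_insert, sum_add_distrib, sum_const, nsmul_eq_mul, cast_card_erase_of_mem hx]
  have hright : ∀ x ∈ Wᶜ, ∑ y ∈ Wᶜ.erase x, (f (insert y W) + f (insert x W)) =
      ∑ y ∈ Wᶜ, f (insert y W) + (#Wᶜ - 2) * f (insert x W) := fun x hx => by
    rw [sum_add_distrib, sum_erase_eq_sub hx, sum_const, nsmul_eq_mul,
      cast_card_erase_of_mem hx]
    ring
  have hsum := sum_le_sum hpair
  rw [sum_congr rfl hleft, sum_congr rfl hright] at hsum
  simp only [sum_add_distrib, sum_const, nsmul_eq_mul, ← mul_sum] at hsum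
  linarith

theorem layerSum_concave (hf : IsSubmodular f) (a : ℕ) :
    (a + 1) * (a + 2) * layerSum f (a + 2) +
        (Fintype.card N - a) * (Fintype.card N - a - 1) * layerSum f a ≤
      2 * (a + 1) * (Fintype.card N - a - 1) * layerSum f (a + 1) := by
  have hcompl : ∀ W ∈ powersetCard a (univ : Finset N), (#Wᶜ : ℝ) = Fintype.card N - a :=
    fun W hW => by
      obtain ⟨-, hWa⟩ := mem_powersetCard.1 hW
      rw [card_compl, hWa, Nat.cast_sub (hWa ▸ card_le_univ W)]
  have htriples := sum_powersetCard_sum_compl_insert a fun V => ∑ y ∈ Vᶜ, f (insert y V)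
  rw [sum_powersetCard_sum_compl_insert (a + 1) f] at htriples
  calc _ = ∑ W ∈ powersetCard a univ, (∑ x ∈ Wᶜ, ∑ y ∈ (insert x W)ᶜ, f (insert y (insert x W))
          + (Fintype.card N - a) * (Fintype.card N - a - 1) * f W) := by
        rw [sum_add_distrib, htriples, ← mul_sum, layerSum, layerSum, smul_smul, nsmul_eq_mul]
        push_cast
        ring
    _ ≤ ∑ W ∈ powersetCard a univ, 2 * ((Fintype.card N : ℝ) - a - 1) *
          ∑ x ∈ Wᶜ, f (insert x W) := sum_le_sum fun W hW => by
        have := hf.sum_compl_insert_insert_add_le W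
        rwa [hcompl W hW] at this
    _ = _ := by
        rw [← mul_sum, sum_powersetCard_sum_compl_insert, layerSum, nsmul_eq_mul]
        push_cast
        ring

theorem layerAvg_add_layerAvg_le (hf : IsSubmodular f) {a : ℕ} (ha : a + 2 ≤ Fintype.card N) :
    layerAvg f a + layerAvg f (a + 2) ≤ 2 * layerAvg f (a + 1) := by
  have hconc := hf.layerSum_concave a
  rw [layerSum_eq_choose_mul_layerAvg f ha, layerSum_eq_choose_mul_layerAvg f (by omega : a ≤ _),
    layerSum_eq_choose_mul_layerAvg f (by omega : a + 1 ≤ _)] at hconc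
  set n := Fintype.card N
  have hchoose : ∀ j, j ≤ n → (n.choose (j + 1) : ℝ) * (j + 1) = n.choose j * (n - j) :=
    fun j hj => by
      have h := congrArg (Nat.cast : ℕ → ℝ) (Nat.choose_succ_right_eq n j)
      push_cast [Nat.cast_sub hj] at h
      exact h
  have htop : (n.choose (a + 2) : ℝ) * (a + 2) = n.choose (a + 1) * (n - a - 1) := by
    have h := hchoose (a + 1) (by omega)
    push_cast at h
    linear_combination h
  have hc : 0 < ((a : ℝ) + 1) * (n - a - 1) * n.choose (a + 1) := by
    have hna : ((a : ℝ) + 2) ≤ n := by exact_mod_cast ha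
    have hchoose_pos : (0 : ℝ) < n.choose (a + 1) := Nat.cast_pos.2 (Nat.choose_pos (by omega))
    exact mul_pos (mul_pos (by positivity) (by linarith)) hchoose_pos
  refine le_of_mul_le_mul_left ?_ hc
  linear_combination hconc - (a + 1) * layerAvg f (a + 2) * htop
    + (n - a - 1) * layerAvg f a * hchoose a (by omega)

theorem layerAvg_chord (hf : IsSubmodular f) (hnn : ∀ S, 0 ≤ f S) {m : ℕ} (hm : 1 ≤ m)
    (hmn : m ≤ Fintype.card N) :
    (Fintype.card N - m) * layerAvg f 1 ≤ (Fintype.card N - 1) * layerAvg f m := by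
  have hchord := concave_seq_chord (g := fun j => layerAvg f (j + 1)) (n := Fintype.card N - 1)
    (fun j hj => hf.layerAvg_add_layerAvg_le (by omega)) (m := m - 1) (by omega)
  simp only [Nat.sub_add_cancel hm, Nat.sub_add_cancel (hm.trans hmn), zero_add] at hchord
  push_cast [Nat.cast_sub hm, Nat.cast_sub (hm.trans hmn)] at hchord
  have htop : 0 ≤ layerAvg f (Fintype.card N) :=
    div_nonneg (layerSum_nonneg hnn _) (Nat.cast_nonneg _)
  have hm' : (1 : ℝ) ≤ m := by exact_mod_cast hm
  nlinarith

theorem pow_sub_pow_mul_layerSum_one_le (hf : IsSubmodular f) (hnn : ∀ S, 0 ≤ f S) {p : ℕ}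
    (hp : Fintype.card N = p + 1) :
    (((p : ℝ) + 1) ^ p - (p : ℝ) ^ p) * layerSum f 1 ≤
      ∑ m ∈ range (p + 2), (p : ℝ) ^ (p + 1 - m) * layerSum f m := by
  rcases p.eq_zero_or_pos with rfl | hp0
  · simp [sum_range_succ, layerSum_nonneg hnn]
  -- The chord bound needs `m ≥ 1`; the indicator cancels what it would claim at `m = 0`.
  have hterm : ∀ m ∈ range (p + 2),
      (p + 1).choose m * ((p : ℝ) + 1 - m) * p ^ (p + 1 - m) * layerAvg f 1
          - (if m = 0 then (p + 1) * p ^ (p + 1) * layerAvg f 1 else 0) ≤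
        p * (p ^ (p + 1 - m) * layerSum f m) := by
    rintro (_ | m) hm
    · simp only [Nat.choose_zero_right, Nat.cast_one, CharP.cast_eq_zero, sub_zero, Nat.sub_zero,
        one_mul, if_true, sub_self]
      exact mul_nonneg (Nat.cast_nonneg p) (mul_nonneg (by positivity) (layerSum_nonneg hnn 0))
    · have hmp : m + 1 ≤ Fintype.card N := by have := mem_range.1 hm; omega
      have hchord := hf.layerAvg_chord hnn (Nat.le_add_left 1 m) hmp
      rw [hp] at hchord hmp
      rw [if_neg m.succ_ne_zero, sub_zero, layerSum_eq_choose_mul_layerAvg f (hp ▸ hmp), hp]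
      push_cast at hchord ⊢
      have hw : (0 : ℝ) ≤ (p + 1).choose (m + 1) * p ^ (p - m) := by positivity
      nlinarith [mul_le_mul_of_nonneg_left hchord hw]
  have hsum := sum_le_sum hterm
  rw [sum_sub_distrib, ← sum_mul, sum_choose_mul_sub_mul_pow, sum_ite_eq' _ 0, if_pos (by simp),
    ← mul_sum] at hsum
  refine le_of_mul_le_mul_left ?_ (Nat.cast_pos.2 hp0 : (0 : ℝ) < p)
  rw [layerSum_eq_choose_mul_layerAvg f (by omega : 1 ≤ _), hp, Nat.choose_one_right]
  push_cast
  linear_combination hsum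

end IsSubmodular
end Layers

theorem sum_uniform_assignment_welfare_eq {N : Type*} [Fintype N] [DecidableEq N]
    (f : Finset N → ℝ) {p : ℕ} (hcard : Fintype.card N = p + 1) :
    ∑ g : N → Fin (p + 1), (1 / ((p + 1 : ℕ) : ℝ)) ^ Fintype.card N *
        ∑ i, f (univ.filter (g · = i)) =
      (∑ m ∈ range (p + 2), (p : ℝ) ^ (p + 1 - m) * layerSum f m) / ((p : ℝ) + 1) ^ p := by
  have hplayer : ∀ i : Fin (p + 1), ∑ g : N → Fin (p + 1), f (univ.filter (g · = i)) =
      ∑ m ∈ range (p + 2), (p : ℝ) ^ (p + 1 - m) * layerSum f m := fun i => by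
    simp [sum_fun_filter_eq, hcard, layerSum]
  rw [← mul_sum, sum_comm, sum_congr rfl fun i _ => hplayer i, sum_const, card_univ,
    Fintype.card_fin, hcard, nsmul_eq_mul, one_div_pow, pow_succ]
  push_cast
  field_simp

/-- random assignment for Submodular Welfare with `k` identical
non-negative submodular utilities on a ground set of `k` items. Assigning each element
independently and uniformly at random to one of the `k` players (an assignment is a
function `g : N → Fin k`, each occurring with probability `(1/k)^n`, and player `i`
receives `S_i = g⁻¹(i)`) yields expected welfare at least
`[1 − (1 − 1/k)^{k−1}]` times the welfare of any fixed partition `OPT_1, …, OPT_k`. -/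
theorem random_assignment_welfare {N : Type*} [Fintype N] [DecidableEq N]
    (k : ℕ) (hk : 1 ≤ k) (hcard : Fintype.card N = k)
    (f : Finset N → ℝ)
    (hnonneg : ∀ S : Finset N, 0 ≤ f S)
    (hsub : ∀ A B : Finset N, f A + f B ≥ f (A ∪ B) + f (A ∩ B))
    (OPT : Fin k → Finset N)
    (hdisj : ∀ i j : Fin k, i ≠ j → Disjoint (OPT i) (OPT j))
    (hcover : Finset.univ.biUnion OPT = Finset.univ) :
    ∑ g : N → Fin k,
        (1 / (k : ℝ)) ^ Fintype.card N *
          ∑ i : Fin k, f (Finset.univ.filter (fun u => g u = i)) ≥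
      (1 - (1 - 1 / (k : ℝ)) ^ (k - 1)) * ∑ i : Fin k, f (OPT i) := by
  obtain ⟨p, rfl⟩ : ∃ p, k = p + 1 := ⟨k - 1, by omega⟩
  have hf : IsSubmodular f := hsub
  have hopt : ∑ i, f (OPT i) ≤ layerSum f 1 := by
    rw [layerSum_one]
    exact hf.sum_le_sum_singleton hdisj hcover (by rw [Fintype.card_fin, hcard])
  have hfactor : 0 ≤ ((p : ℝ) + 1) ^ p - (p : ℝ) ^ p :=
    sub_nonneg.2 (pow_le_pow_left₀ (Nat.cast_nonneg p) (by linarith) p)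
  have hpos : (0 : ℝ) < (p : ℝ) + 1 := by positivity
  rw [ge_iff_le, sum_uniform_assignment_welfare_eq f hcard, Nat.add_sub_cancel, Nat.cast_succ,
    one_sub_div hpos.ne', add_sub_cancel_right, div_pow, one_sub_div (pow_pos hpos p).ne',
    div_mul_eq_mul_div]
  exact div_le_div_of_nonneg_right ((mul_le_mul_of_nonneg_left hopt hfactor).trans
    (hf.pow_sub_pow_mul_layerSum_one_le hnonneg hcard)) (by positivity)
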